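/- Multivariate deformed Vandermonde formula, second form: let 0 < τ₂ < τ₁ be reals, let n, k be naturals with k ≥ 1, and let x₁, …, x_{k+1} be real numbers. Then [x₁ + ⋯ + x_{k+1}]_n = Σ M(n; r₁,…,r_k) · τ₂^{Σ_{j=1}^{k} r_j(z_j − (n − s_j))} · τ₁^{Σ_{j=1}^{k} (n − s_j)(x_j − r_j)} · ∏_{j=1}^{k+1} [x_j]_{r_j}, where the sum runs over all tuples (r₁,…,r_k) of naturals with r₁ + ⋯ + r_k ≤ n, and where s_j = r₁ + ⋯ + r_j, r_{k+1} = n − s_k, and z_j = x_{j+1} + ⋯ + x_{k+1}. -/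

import Mathlib

open Finset

noncomputable def dnum (τ₁ τ₂ x : ℝ) : ℝ := (τ₁ ^ x - τ₂ ^ x) / (τ₁ - τ₂)

noncomputable def dfac (τ₁ τ₂ : ℝ) (r : ℕ) : ℝ :=
  ∏ j ∈ Finset.range r, dnum τ₁ τ₂ ((j : ℝ) + 1)

noncomputable def dfall (τ₁ τ₂ x : ℝ) (r : ℕ) : ℝ :=
  ∏ i ∈ Finset.range r, dnum τ₁ τ₂ (x - (i : ℝ))

noncomputable def dbinom (τ₁ τ₂ x : ℝ) (r : ℕ) : ℝ := dfall τ₁ τ₂ x r / dfac τ₁ τ₂ r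

noncomputable def dmulti (τ₁ τ₂ x : ℝ) {k : ℕ} (r : Fin k → ℕ) : ℝ :=
  dfall τ₁ τ₂ x (∑ j, r j) / ∏ j, dfac τ₁ τ₂ (r j)

/-!
Induction on the number of variables. The two-variable case
`[x + y]_n = ∑_{a+b=n} M(n; a) τ₂^{a(y-b)} τ₁^{b(x-a)} [x]_a [y]_b`
follows by induction on `n` from `[u + v] = τ₁^u [v] + τ₂^v [u]` and the matching Pascal rule
`M(n+1; a+1) = τ₂^{a+1} M(n; a+1) + τ₁^{n-a} M(n; a)`.
For `k + 1` variables, apply it to `x₁` and `x₂ + ⋯ + x_{k+2}`, expand the second falling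
factorial `[x₂ + ⋯]_{n-r₁}` by the induction hypothesis, and regroup: `M(n; r₁) M(n - r₁; r₂, …)`
is `M(n; r₁, r₂, …)` and the exponents add up.
-/

variable {τ₁ τ₂ : ℝ}

section OneVariable

@[simp]
lemma dnum_zero (τ₁ τ₂ : ℝ) : dnum τ₁ τ₂ 0 = 0 := by
  simp [dnum]

lemma dnum_add (hτ₁ : 0 < τ₁) (hτ₂ : 0 < τ₂) (u v : ℝ) :
    dnum τ₁ τ₂ (u + v) = τ₁ ^ u * dnum τ₁ τ₂ v + τ₂ ^ v * dnum τ₁ τ₂ u := by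
  simp only [dnum, Real.rpow_add hτ₁, Real.rpow_add hτ₂]
  ring

lemma dnum_ne_zero (hτ₁ : 0 < τ₁) (hτ₂ : 0 < τ₂) (hne : τ₁ ≠ τ₂) {x : ℝ} (hx : x ≠ 0) :
    dnum τ₁ τ₂ x ≠ 0 := by
  have hpow : τ₁ ^ x - τ₂ ^ x ≠ 0 :=
    sub_ne_zero.2 fun h => hne ((Real.rpow_left_inj hτ₁.le hτ₂.le hx).1 h)
  exact div_ne_zero hpow (sub_ne_zero.2 hne)

lemma dfac_succ (τ₁ τ₂ : ℝ) (r : ℕ) :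
    dfac τ₁ τ₂ (r + 1) = dfac τ₁ τ₂ r * dnum τ₁ τ₂ ((r : ℝ) + 1) :=
  prod_range_succ _ _

lemma dfac_ne_zero (hτ₁ : 0 < τ₁) (hτ₂ : 0 < τ₂) (hne : τ₁ ≠ τ₂) (r : ℕ) :
    dfac τ₁ τ₂ r ≠ 0 :=
  prod_ne_zero_iff.2 fun _ _ => dnum_ne_zero hτ₁ hτ₂ hne (by positivity)

@[simp]
lemma dfall_zero (τ₁ τ₂ x : ℝ) : dfall τ₁ τ₂ x 0 = 1 := prod_range_zero _

lemma dfall_succ (τ₁ τ₂ x : ℝ) (r : ℕ) :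
    dfall τ₁ τ₂ x (r + 1) = dfall τ₁ τ₂ x r * dnum τ₁ τ₂ (x - r) :=
  prod_range_succ _ _

lemma dfall_succ' (τ₁ τ₂ x : ℝ) (r : ℕ) :
    dfall τ₁ τ₂ x (r + 1) = dfall τ₁ τ₂ (x - 1) r * dnum τ₁ τ₂ x := by
  simp only [dfall, prod_range_succ', Nat.cast_succ, Nat.cast_zero, sub_zero, sub_sub, add_comm]

lemma dfall_add (τ₁ τ₂ x : ℝ) (a b : ℕ) :
    dfall τ₁ τ₂ x (a + b) = dfall τ₁ τ₂ x a * dfall τ₁ τ₂ (x - a) b := by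
  simp only [dfall, prod_range_add, Nat.cast_add, sub_sub]

lemma dfall_natCast_self_succ (τ₁ τ₂ : ℝ) (n : ℕ) : dfall τ₁ τ₂ n (n + 1) = 0 := by
  rw [dfall_succ, sub_self, dnum_zero, mul_zero]

@[simp]
lemma dbinom_zero (τ₁ τ₂ x : ℝ) : dbinom τ₁ τ₂ x 0 = 1 := by
  simp [dbinom, dfac]

lemma dbinom_natCast_self_succ (τ₁ τ₂ : ℝ) (n : ℕ) : dbinom τ₁ τ₂ n (n + 1) = 0 := by
  rw [dbinom, dfall_natCast_self_succ, zero_div]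

lemma dbinom_succ_succ (hτ₁ : 0 < τ₁) (hτ₂ : 0 < τ₂) (hne : τ₁ ≠ τ₂) (n r : ℕ) :
    dbinom τ₁ τ₂ ((n : ℝ) + 1) (r + 1) =
      τ₂ ^ ((r : ℝ) + 1) * dbinom τ₁ τ₂ n (r + 1) + τ₁ ^ ((n : ℝ) - r) * dbinom τ₁ τ₂ n r := by
  have hfac := dfac_ne_zero hτ₁ hτ₂ hne r
  have hnum := dnum_ne_zero hτ₁ hτ₂ hne (x := (r : ℝ) + 1) (by positivity)
  have hsplit := dnum_add hτ₁ hτ₂ ((n : ℝ) - r) ((r : ℝ) + 1)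
  rw [show (n : ℝ) - r + (r + 1) = n + 1 by ring] at hsplit
  simp only [dbinom, dfall_succ' _ _ ((n : ℝ) + 1), dfac_succ, dfall_succ, hsplit,
    add_sub_cancel_right]
  field_simp
  ring

end OneVariable

section TwoVariables

noncomputable def vandermondeWeight (τ₁ τ₂ x y : ℝ) (a b : ℕ) : ℝ :=
  τ₂ ^ ((a : ℝ) * (y - b)) * τ₁ ^ ((b : ℝ) * (x - a)) * dfall τ₁ τ₂ x a * dfall τ₁ τ₂ y b

lemma vandermondeWeight_mul_dnum (hτ₁ : 0 < τ₁) (hτ₂ : 0 < τ₂) (x y : ℝ) (a b : ℕ) :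
    vandermondeWeight τ₁ τ₂ x y a b * dnum τ₁ τ₂ (x + y - (a + b)) =
      τ₂ ^ (a : ℝ) * vandermondeWeight τ₁ τ₂ x y a (b + 1) +
        τ₁ ^ (b : ℝ) * vandermondeWeight τ₁ τ₂ x y (a + 1) b := by
  have hsplit : x + y - (a + b) = (x - a) + (y - b) := by ring
  have h₂ : τ₂ ^ (a : ℝ) * τ₂ ^ ((a : ℝ) * (y - (b + 1 : ℕ))) = τ₂ ^ ((a : ℝ) * (y - b)) := by
    rw [← Real.rpow_add hτ₂]; push_cast; ring_nf
  have h₁ : τ₁ ^ (((b + 1 : ℕ) : ℝ) * (x - a)) = τ₁ ^ ((b : ℝ) * (x - a)) * τ₁ ^ (x - a) := by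
    rw [← Real.rpow_add hτ₁]; push_cast; ring_nf
  have h₂' : τ₂ ^ (((a + 1 : ℕ) : ℝ) * (y - b)) = τ₂ ^ ((a : ℝ) * (y - b)) * τ₂ ^ (y - b) := by
    rw [← Real.rpow_add hτ₂]; push_cast; ring_nf
  have h₁' : τ₁ ^ (b : ℝ) * τ₁ ^ ((b : ℝ) * (x - (a + 1 : ℕ))) = τ₁ ^ ((b : ℝ) * (x - a)) := by
    rw [← Real.rpow_add hτ₁]; push_cast; ring_nf
  simp only [vandermondeWeight, hsplit, dnum_add hτ₁ hτ₂, dfall_succ, h₁, h₂']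
  linear_combination
    -(τ₁ ^ ((b : ℝ) * (x - a)) * τ₁ ^ (x - a) * dfall τ₁ τ₂ x a * dfall τ₁ τ₂ y b *
        dnum τ₁ τ₂ (y - b)) * h₂ -
      (τ₂ ^ ((a : ℝ) * (y - b)) * τ₂ ^ (y - b) * dfall τ₁ τ₂ x a * dnum τ₁ τ₂ (x - a) *
        dfall τ₁ τ₂ y b) * h₁'

theorem dfall_add_eq_sum_antidiagonal (hτ₁ : 0 < τ₁) (hτ₂ : 0 < τ₂) (hne : τ₁ ≠ τ₂)
    (x y : ℝ) (n : ℕ) :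
    dfall τ₁ τ₂ (x + y) n =
      ∑ p ∈ antidiagonal n, dbinom τ₁ τ₂ n p.1 * vandermondeWeight τ₁ τ₂ x y p.1 p.2 := by
  induction n with
  | zero => simp [vandermondeWeight]
  | succ n ih =>
    set W := vandermondeWeight τ₁ τ₂ x y
    set B := dbinom τ₁ τ₂ n
    calc dfall τ₁ τ₂ (x + y) (n + 1)
        = ∑ p ∈ antidiagonal n, B p.1 * (W p.1 p.2 * dnum τ₁ τ₂ (x + y - (p.1 + p.2))) := by
          rw [dfall_succ, ih, sum_mul]
          refine sum_congr rfl fun p hp => ?_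
          rw [← mem_antidiagonal.1 hp, Nat.cast_add, mul_assoc]
      _ = ∑ p ∈ antidiagonal n, τ₂ ^ (p.1 : ℝ) * B p.1 * W p.1 (p.2 + 1) +
            ∑ p ∈ antidiagonal n, τ₁ ^ (p.2 : ℝ) * B p.1 * W (p.1 + 1) p.2 := by
          rw [← sum_add_distrib]
          refine sum_congr rfl fun p _ => ?_
          rw [vandermondeWeight_mul_dnum hτ₁ hτ₂]
          ring
      _ = ∑ p ∈ antidiagonal (n + 1), τ₂ ^ (p.1 : ℝ) * B p.1 * W p.1 p.2 +
            ∑ p ∈ antidiagonal n, τ₁ ^ (p.2 : ℝ) * B p.1 * W (p.1 + 1) p.2 := by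
          simp [Nat.sum_antidiagonal_succ', B, dbinom_natCast_self_succ]
      _ = W 0 (n + 1) + ∑ p ∈ antidiagonal n,
            (τ₂ ^ ((p.1 : ℝ) + 1) * B (p.1 + 1) + τ₁ ^ (p.2 : ℝ) * B p.1) * W (p.1 + 1) p.2 := by
          simp only [Nat.sum_antidiagonal_succ, add_mul, sum_add_distrib, Nat.cast_add,
            Nat.cast_one]
          simp [B, add_assoc]
      _ = ∑ p ∈ antidiagonal (n + 1), dbinom τ₁ τ₂ ((n + 1 : ℕ) : ℝ) p.1 * W p.1 p.2 := by
          rw [Nat.sum_antidiagonal_succ, dbinom_zero, one_mul, Nat.cast_succ]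
          congr 1
          refine sum_congr rfl fun p hp => ?_
          have hb : (p.2 : ℝ) = n - p.1 := by
            rw [← mem_antidiagonal.1 hp, Nat.cast_add]; ring
          rw [dbinom_succ_succ hτ₁ hτ₂ hne, hb]

end TwoVariables

namespace Fin

variable {k : ℕ}

lemma sum_Iic_zero {M : Type*} [AddCommMonoid M] (f : Fin (k + 1) → M) :
    ∑ i ∈ Iic 0, f i = f 0 := by
  rw [show (0 : Fin (k + 1)) = ⊥ from rfl, Iic_bot, sum_singleton]

lemma sum_Iic_succ_cons {M : Type*} [AddCommMonoid M] (a : M) (f : Fin k → M) (j : Fin k) :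
    ∑ i ∈ Iic j.succ, (cons a f : Fin (k + 1) → M) i = a + ∑ i ∈ Iic j, f i := by
  simp only [← filter_ge_eq_Iic, sum_filter, sum_univ_succ, cons_zero, cons_succ,
    succ_le_succ_iff, zero_le, if_true]

lemma sum_filter_succ_lt {M : Type*} [AddCommMonoid M] (f : Fin (k + 1) → M) (m : ℕ) :
    ∑ i ∈ univ.filter (fun i : Fin (k + 1) => m + 1 < (i : ℕ)), f i =
      ∑ i ∈ univ.filter (fun i : Fin k => m < (i : ℕ)), f i.succ := by
  simp [sum_filter, sum_univ_succ]

lemma sum_filter_zero_lt {M : Type*} [AddCommMonoid M] (f : Fin (k + 1) → M) :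
    ∑ i ∈ univ.filter (fun i : Fin (k + 1) => 0 < (i : ℕ)), f i = ∑ i : Fin k, f i.succ := by
  simp [sum_filter, sum_univ_succ]

end Fin

section ManyVariables

variable {k : ℕ}

def vandermondeIndices (k n : ℕ) : Finset (Fin k → ℕ) :=
  (Fintype.piFinset fun _ : Fin k => range (n + 1)).filter (fun r => ∑ j, r j ≤ n)

noncomputable def vandermondeExp₂ (n : ℕ) (x : Fin (k + 1) → ℝ) (r : Fin k → ℕ) : ℝ :=
  ∑ j : Fin k, (r j : ℝ) *
    ((∑ i ∈ univ.filter fun i : Fin (k + 1) => (j : ℕ) < (i : ℕ), x i) -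
      ((n : ℝ) - ((∑ i ∈ Iic j, r i : ℕ) : ℝ)))

noncomputable def vandermondeExp₁ (n : ℕ) (x : Fin (k + 1) → ℝ) (r : Fin k → ℕ) : ℝ :=
  ∑ j : Fin k, ((n : ℝ) - ((∑ i ∈ Iic j, r i : ℕ) : ℝ)) * (x j.castSucc - (r j : ℝ))

noncomputable def vandermondeTerm (τ₁ τ₂ : ℝ) (n : ℕ) (x : Fin (k + 1) → ℝ) (r : Fin k → ℕ) :
    ℝ :=
  dmulti τ₁ τ₂ n r * τ₂ ^ vandermondeExp₂ n x r * τ₁ ^ vandermondeExp₁ n x r *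
    ∏ j : Fin (k + 1), dfall τ₁ τ₂ (x j) ((Fin.snoc r (n - ∑ i, r i) : Fin (k + 1) → ℕ) j)

lemma mem_vandermondeIndices {n : ℕ} {r : Fin k → ℕ} :
    r ∈ vandermondeIndices k n ↔ ∑ j, r j ≤ n := by
  simp only [vandermondeIndices, mem_filter, Fintype.mem_piFinset, mem_range,
    and_iff_right_iff_imp]
  exact fun h j =>
    Nat.lt_succ_of_le ((single_le_sum (fun i _ => Nat.zero_le (r i)) (mem_univ j)).trans h)

lemma sum_vandermondeIndices_succ {M : Type*} [AddCommMonoid M] (n : ℕ)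
    (G : (Fin (k + 1) → ℕ) → M) :
    ∑ r ∈ vandermondeIndices (k + 1) n, G r =
      ∑ a ∈ range (n + 1), ∑ r' ∈ vandermondeIndices k (n - a), G (Fin.cons a r') := by
  rw [sum_sigma']
  refine sum_nbij' (fun r => ⟨r 0, Fin.tail r⟩) (fun p => Fin.cons p.1 p.2) ?_ ?_ ?_ ?_ ?_
  · intro r hr
    simp only [mem_sigma, mem_range, mem_vandermondeIndices] at hr ⊢
    rw [Fin.sum_univ_succ] at hr
    exact ⟨by omega, by simp only [Fin.tail]; omega⟩
  · rintro ⟨a, r'⟩ hp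
    simp only [mem_sigma, mem_range, mem_vandermondeIndices] at hp ⊢
    simp only [Fin.sum_univ_succ, Fin.cons_zero, Fin.cons_succ]
    omega
  · intro r _
    exact Fin.cons_self_tail r
  · rintro ⟨a, r'⟩ _
    simp
  · intro r _
    rw [Fin.cons_self_tail]

lemma vandermondeExp₂_cons {n a b : ℕ} (hab : a + b = n) (x : Fin (k + 2) → ℝ) (r' : Fin k → ℕ) :
    vandermondeExp₂ n x (Fin.cons a r') =
      a * (∑ i, Fin.tail x i - b) + vandermondeExp₂ b (Fin.tail x) r' := by
  subst hab
  rw [vandermondeExp₂, vandermondeExp₂, Fin.sum_univ_succ]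
  congr 1
  · rw [Fin.sum_Iic_zero, Fin.cons_zero, Fin.val_zero, Fin.sum_filter_zero_lt]
    push_cast [Fin.tail]
    ring
  · refine sum_congr rfl fun j _ => ?_
    rw [Fin.cons_succ, Fin.sum_Iic_succ_cons, Fin.val_succ, Fin.sum_filter_succ_lt]
    push_cast [Fin.tail]
    ring

lemma vandermondeExp₁_cons {n a b : ℕ} (hab : a + b = n) (x : Fin (k + 2) → ℝ) (r' : Fin k → ℕ) :
    vandermondeExp₁ n x (Fin.cons a r') =
      b * (x 0 - a) + vandermondeExp₁ b (Fin.tail x) r' := by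
  subst hab
  rw [vandermondeExp₁, vandermondeExp₁, Fin.sum_univ_succ]
  congr 1
  · rw [Fin.sum_Iic_zero, Fin.cons_zero, Fin.castSucc_zero]
    push_cast [Fin.tail]
    ring
  · refine sum_congr rfl fun j _ => ?_
    rw [Fin.cons_succ, Fin.sum_Iic_succ_cons, ← Fin.succ_castSucc]
    push_cast [Fin.tail]
    ring

lemma prod_dfall_snoc_cons {n a b : ℕ} (hab : a + b = n) (x : Fin (k + 2) → ℝ) (r' : Fin k → ℕ) :
    ∏ j, dfall τ₁ τ₂ (x j)
        ((Fin.snoc (Fin.cons a r' : Fin (k + 1) → ℕ) (n - ∑ i, Fin.cons a r' i) :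
          Fin (k + 2) → ℕ) j) =
      dfall τ₁ τ₂ (x 0) a *
        ∏ j, dfall τ₁ τ₂ (Fin.tail x j) ((Fin.snoc r' (b - ∑ i, r' i) : Fin (k + 1) → ℕ) j) := by
  have hlast : n - ∑ i, (Fin.cons a r' : Fin (k + 1) → ℕ) i = b - ∑ i, r' i := by
    rw [Fin.sum_cons]; omega
  rw [hlast, ← Fin.cons_snoc_eq_snoc_cons, Fin.prod_univ_succ]
  simp only [Fin.cons_zero, Fin.cons_succ, Fin.tail]

lemma dmulti_cons (τ₁ τ₂ : ℝ) {n a b : ℕ} (hab : a + b = n) (r' : Fin k → ℕ) :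
    dmulti τ₁ τ₂ n (Fin.cons a r') = dbinom τ₁ τ₂ n a * dmulti τ₁ τ₂ b r' := by
  have hb : (n : ℝ) - a = b := by rw [← hab, Nat.cast_add, add_sub_cancel_left]
  rw [dmulti, dmulti, dbinom, Fin.sum_cons, Fin.prod_univ_succ, Fin.cons_zero, dfall_add, hb,
    div_mul_div_comm]
  simp only [Fin.cons_succ]

lemma vandermondeTerm_cons (hτ₁ : 0 < τ₁) (hτ₂ : 0 < τ₂) {n a b : ℕ} (hab : a + b = n)
    (x : Fin (k + 2) → ℝ) (r' : Fin k → ℕ) :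
    vandermondeTerm τ₁ τ₂ n x (Fin.cons a r') =
      dbinom τ₁ τ₂ n a * τ₂ ^ ((a : ℝ) * (∑ i, Fin.tail x i - b)) * τ₁ ^ ((b : ℝ) * (x 0 - a)) *
        dfall τ₁ τ₂ (x 0) a * vandermondeTerm τ₁ τ₂ b (Fin.tail x) r' := by
  rw [vandermondeTerm, vandermondeTerm, dmulti_cons _ _ hab, vandermondeExp₂_cons hab,
    vandermondeExp₁_cons hab, prod_dfall_snoc_cons hab, Real.rpow_add hτ₂, Real.rpow_add hτ₁]
  ring

theorem dfall_sum_eq_sum_vandermondeTerm (hτ₁ : 0 < τ₁) (hτ₂ : 0 < τ₂) (hne : τ₁ ≠ τ₂)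
    (k n : ℕ) (x : Fin (k + 1) → ℝ) :
    dfall τ₁ τ₂ (∑ i, x i) n = ∑ r ∈ vandermondeIndices k n, vandermondeTerm τ₁ τ₂ n x r := by
  induction k generalizing n with
  | zero =>
    simp [vandermondeIndices, vandermondeTerm, vandermondeExp₁, vandermondeExp₂, dmulti, Fin.snoc]
  | succ k ih =>
    rw [Fin.sum_univ_succ, dfall_add_eq_sum_antidiagonal hτ₁ hτ₂ hne,
      Nat.sum_antidiagonal_eq_sum_range_succ_mk, sum_vandermondeIndices_succ]
    refine sum_congr rfl fun a ha => ?_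
    have hab : a + (n - a) = n := Nat.add_sub_of_le (Nat.lt_succ_iff.1 (mem_range.1 ha))
    rw [vandermondeWeight, ih, mul_sum, mul_sum]
    refine sum_congr rfl fun r' _ => ?_
    rw [vandermondeTerm_cons hτ₁ hτ₂ hab]
    simp only [mul_assoc]
    rfl

end ManyVariables

theorem deformed_multivariate_vandermonde_second_general
    (τ₁ τ₂ : ℝ) (hτ₂ : 0 < τ₂) (hττ : τ₂ < τ₁)
    (n k : ℕ) (x : Fin (k + 1) → ℝ) :
    dfall τ₁ τ₂ (∑ i, x i) n =
      ∑ r ∈ (Fintype.piFinset fun _ : Fin k => Finset.range (n + 1)).filter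
          (fun r => ∑ j, r j ≤ n),
        dmulti τ₁ τ₂ (n : ℝ) r *
          τ₂ ^ (∑ j : Fin k, (r j : ℝ) *
              ((∑ i ∈ Finset.univ.filter fun i : Fin (k + 1) => (j : ℕ) < (i : ℕ), x i) -
                ((n : ℝ) - ((∑ i ∈ Finset.Iic j, r i : ℕ) : ℝ)))) *
          τ₁ ^ (∑ j : Fin k, ((n : ℝ) - ((∑ i ∈ Finset.Iic j, r i : ℕ) : ℝ)) *
              (x j.castSucc - (r j : ℝ))) *
          ∏ j : Fin (k + 1), dfall τ₁ τ₂ (x j) ((Fin.snoc r (n - ∑ i, r i) : Fin (k + 1) → ℕ) j) :=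
  dfall_sum_eq_sum_vandermondeTerm (hτ₂.trans hττ) hτ₂ hττ.ne' k n x

/-- Multivariate deformed Vandermonde formula, second form:
`[x₁+⋯+x_{k+1}]_n = Σ M(n; r₁,…,r_k) τ₂^{Σ_j r_j(z_j−(n−s_j))}
  τ₁^{Σ_j (n−s_j)(x_j−r_j)} Π_j [x_j]_{r_j}`,
summed over tuples `(r₁,…,r_k)` with `r₁+⋯+r_k ≤ n`, where `s_j = r₁+⋯+r_j`,
`r_{k+1} = n − s_k` and `z_j = x_{j+1}+⋯+x_{k+1}`. -/
theorem deformed_multivariate_vandermonde_second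
    (τ₁ τ₂ : ℝ) (hτ₂ : 0 < τ₂) (hττ : τ₂ < τ₁)
    (n k : ℕ) (hk : 1 ≤ k) (x : Fin (k + 1) → ℝ) :
    dfall τ₁ τ₂ (∑ i, x i) n =
      ∑ r ∈ (Fintype.piFinset fun _ : Fin k => Finset.range (n + 1)).filter
          (fun r => ∑ j, r j ≤ n),
        dmulti τ₁ τ₂ (n : ℝ) r *
          τ₂ ^ (∑ j : Fin k, (r j : ℝ) *
              ((∑ i ∈ Finset.univ.filter fun i : Fin (k + 1) => (j : ℕ) < (i : ℕ), x i) -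
                ((n : ℝ) - ((∑ i ∈ Finset.Iic j, r i : ℕ) : ℝ)))) *
          τ₁ ^ (∑ j : Fin k, ((n : ℝ) - ((∑ i ∈ Finset.Iic j, r i : ℕ) : ℝ)) *
              (x j.castSucc - (r j : ℝ))) *
          ∏ j : Fin (k + 1), dfall τ₁ τ₂ (x j) ((Fin.snoc r (n - ∑ i, r i) : Fin (k + 1) → ℕ) j) :=
  deformed_multivariate_vandermonde_second_general τ₁ τ₂ hτ₂ hττ n k x
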